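/- arXiv:math/0404560 — 8 statements merged into one kernel-verified Lean document; each statement's English description precedes it below -/
import Mathlib

section
/- If p is an odd prime and β ≥ 1, then the product of all residues modulo p^β that are coprime to p^β is congruent to -1 modulo p^β. -/
lemma sq_eq_one_aux (p β : ℕ) (hp : p.Prime) (hodd : Odd p)
    (x : ZMod (p ^ β)) (h : x ^ 2 = 1) : x = 1 ∨ x = -1 := by
  haveI : NeZero (p ^ β) := ⟨pow_ne_zero _ hp.ne_zero⟩
  have hpz : Prime (p : ℤ) := Nat.prime_iff_prime_int.mp hp
  set a : ℤ := (x.val : ℤ) with ha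
  have hx : ((a : ℤ) : ZMod (p ^ β)) = x := by simp [ha]
  have hdvd : ((p : ℤ) ^ β) ∣ (a - 1) * (a + 1) := by
    have hc : (((a - 1) * (a + 1) : ℤ) : ZMod (p ^ β)) = x ^ 2 - 1 := by
      push_cast [hx]; ring
    have : (((a - 1) * (a + 1) : ℤ) : ZMod (p ^ β)) = 0 := by rw [hc, h, sub_self]
    have := (ZMod.intCast_zmod_eq_zero_iff_dvd _ _).mp this
    push_cast at this
    exact this
  have hnot : ¬ ((p : ℤ) ∣ a - 1) ∨ ¬ ((p : ℤ) ∣ a + 1) := by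
    by_contra hcon
    push_neg at hcon
    have h2 : (p : ℤ) ∣ 2 := by
      have := dvd_sub hcon.2 hcon.1
      simpa using this
    have h3 : p ∣ 2 := by exact_mod_cast h2
    have := (Nat.prime_dvd_prime_iff_eq hp Nat.prime_two).mp h3
    simp [this, Nat.odd_iff] at hodd
  rcases hnot with hn1 | hn1
  · right
    have hcop : IsCoprime ((p : ℤ) ^ β) (a - 1) := (hpz.coprime_iff_not_dvd.mpr hn1).pow_left
    have : ((p : ℤ) ^ β) ∣ (a + 1) := hcop.dvd_of_dvd_mul_left (mul_comm (a-1) (a+1) ▸ hdvd)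
    have : (((a + 1) : ℤ) : ZMod (p ^ β)) = 0 := by
      rw [ZMod.intCast_zmod_eq_zero_iff_dvd]; push_cast; exact this
    push_cast [hx] at this
    exact eq_neg_of_add_eq_zero_left this
  · left
    have hcop : IsCoprime ((p : ℤ) ^ β) (a + 1) := (hpz.coprime_iff_not_dvd.mpr hn1).pow_left
    have : ((p : ℤ) ^ β) ∣ (a - 1) := hcop.dvd_of_dvd_mul_right hdvd
    have : (((a - 1) : ℤ) : ZMod (p ^ β)) = 0 := by
      rw [ZMod.intCast_zmod_eq_zero_iff_dvd]; push_cast; exact this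
    push_cast [hx] at this
    exact sub_eq_zero.mp this

lemma units_prod_aux (p β : ℕ) [NeZero (p ^ β)] (hp : p.Prime) (hodd : Odd p) (hβ : 1 ≤ β) :
    (∏ u : (ZMod (p ^ β))ˣ, u) = -1 := by
  classical
  have h3 : 3 ≤ p := by
    have h2 := hp.two_le
    rcases Nat.lt_or_ge p 3 with h | h
    · interval_cases p
      · simp [Nat.odd_iff] at hodd
    · exact h
  haveI : Fact (2 < p ^ β) := ⟨lt_of_lt_of_le (by norm_num)
    (le_trans h3 (Nat.le_self_pow (by omega) p))⟩
  have hinv : ∀ u : (ZMod (p ^ β))ˣ, u⁻¹ = u → u = 1 ∨ u = -1 := by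
    intro u hu
    have h1 : u * u = 1 := by nth_rewrite 2 [← hu]; exact mul_inv_cancel u
    have hsq : ((u : ZMod (p ^ β)))^2 = 1 := by
      have := congrArg (Units.val) h1
      simpa [pow_two] using this
    rcases sq_eq_one_aux p β hp hodd _ hsq with h | h
    · exact Or.inl (Units.ext (by simpa using h))
    · exact Or.inr (Units.ext (by simpa using h))
  have h1 : (∏ x ∈ (Finset.univ : Finset (ZMod (p ^ β))ˣ).erase (-1), x) = 1 := by
    refine Finset.prod_involution (fun x _ => x⁻¹) (by simp) ?_ (fun a ha => ?_) (by simp)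
    · intro a ha hne1 heq
      rcases hinv a heq with h | h
      · exact hne1 h
      · rw [h] at ha; exact (Finset.notMem_erase _ _) ha
    · simp only [Finset.mem_erase, Finset.mem_univ, and_true] at ha ⊢
      intro h
      apply ha
      rw [← inv_inv a, h]
      simp
  rw [← Finset.insert_erase (Finset.mem_univ (-1 : (ZMod (p ^ β))ˣ)),
    Finset.prod_insert (Finset.notMem_erase _ _), h1, mul_one]

theorem gauss_odd_prime_power (p : ℕ) (hp : p.Prime) (hodd : Odd p) (β : ℕ) (hβ : 1 ≤ β) :
    (∏ c ∈ (Finset.range (p ^ β)).filter (fun c => Nat.Coprime c (p ^ β)), (c : ℤ))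
      ≡ -1 [ZMOD (p ^ β)] := by
  classical
  haveI : NeZero (p ^ β) := ⟨pow_ne_zero _ hp.ne_zero⟩
  have hcast : ((p : ℤ)) ^ β = ((p ^ β : ℕ) : ℤ) := by push_cast; ring
  rw [show ((p:ℤ)^β) = ((p^β : ℕ) : ℤ) from hcast] at *
  rw [← ZMod.intCast_eq_intCast_iff]
  push_cast
  have key : (∏ c ∈ (Finset.range (p ^ β)).filter (fun c => Nat.Coprime c (p ^ β)),
      ((c : ℕ) : ZMod (p ^ β))) = ∏ u : (ZMod (p ^ β))ˣ, (u : ZMod (p ^ β)) := by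
    symm
    refine Finset.prod_bij (fun (u : (ZMod (p ^ β))ˣ) _ => (u : ZMod (p ^ β)).val)
      ?_ ?_ ?_ ?_
    · intro u _
      simp only [Finset.mem_filter, Finset.mem_range]
      exact ⟨ZMod.val_lt _, ZMod.val_coe_unit_coprime u⟩
    · intro u _ v _ h
      apply Units.ext
      have := congrArg (fun t : ℕ => ((t : ℕ) : ZMod (p ^ β))) h
      simpa [ZMod.natCast_val, ZMod.cast_id] using this
    · intro c hc
      simp only [Finset.mem_filter, Finset.mem_range] at hc
      refine ⟨ZMod.unitOfCoprime c hc.2, Finset.mem_univ _, ?_⟩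
      simp [ZMod.unitOfCoprime, ZMod.val_cast_of_lt hc.1]
    · intro u _
      simp [ZMod.natCast_val, ZMod.cast_id]
  rw [key]
  simp_rw [← Units.coeHom_apply]
  rw [← map_prod (Units.coeHom (ZMod (p ^ β))) (fun u => u) Finset.univ, units_prod_aux p β hp hodd hβ]
  simp
end

section
/- If m ≥ 3 is a power of 2 with m ≥ 8, then the product of all residues modulo m coprime to m is congruent to +1 modulo m. -/
open Finset

private lemma gauss_core (α : ℕ) (hα : 3 ≤ α) (x : ZMod (2 ^ α)) (hx : x * x = 1) :
    x = 1 ∨ x = -1 ∨ x = ((2 ^ (α - 1) : ℕ) : ZMod (2 ^ α)) + 1 ∨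
      x = ((2 ^ (α - 1) : ℕ) : ZMod (2 ^ α)) - 1 := by
  haveI : NeZero (2 ^ α) := ⟨pow_ne_zero _ two_ne_zero⟩
  have h8 : 8 ≤ 2 ^ α := by
    calc (8:ℕ) = 2 ^ 3 := by norm_num
    _ ≤ 2 ^ α := Nat.pow_le_pow_right (by norm_num) hα
  set v := x.val with hvdef
  have hxv : ((v : ℕ) : ZMod (2 ^ α)) = x := ZMod.natCast_zmod_val x
  haveI : Fact (1 < 2 ^ α) := ⟨by omega⟩
  have hv0 : v ≠ 0 := by
    intro h
    have hx0 : x = 0 := by rw [← hxv, h]; simp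
    rw [hx0] at hx
    simp at hx
  have hv1 : 1 ≤ v * v := Nat.one_le_iff_ne_zero.mpr (by positivity)
  have hdvd : 2 ^ α ∣ v * v - 1 := by
    have h1 : ((v * v : ℕ) : ZMod (2 ^ α)) = ((1 : ℕ) : ZMod (2 ^ α)) := by
      push_cast [hxv]; exact hx
    have h2 : v * v ≡ 1 [MOD 2 ^ α] := (ZMod.natCast_eq_natCast_iff _ _ _).mp h1
    exact (Nat.modEq_iff_dvd' hv1).mp h2.symm
  have hvodd : Odd v := by
    rcases Nat.even_or_odd v with he | ho
    · exfalso
      have h2a : (2:ℕ) ∣ v * v - 1 := dvd_trans (dvd_pow_self 2 (by omega)) hdvd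
      have h2b : (2:ℕ) ∣ v * v := (he.mul_right v).two_dvd
      omega
    · exact ho
  obtain ⟨k, hk⟩ := hvodd
  have hsq : v * v = 4 * (k * (k + 1)) + 1 := by rw [hk]; ring
  have hdvd2 : 2 ^ α ∣ 4 * (k * (k + 1)) := by
    rw [hsq] at hdvd; simpa using hdvd
  have hαsplit : 2 ^ α = 4 * 2 ^ (α - 2) := by
    rw [show (4:ℕ) = 2 ^ 2 by norm_num, ← pow_add]
    congr 1; omega
  have hdvd3 : 2 ^ (α - 2) ∣ k * (k + 1) := by
    rw [hαsplit] at hdvd2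
    exact (Nat.mul_dvd_mul_iff_left (by norm_num : (0:ℕ) < 4)).mp hdvd2
  have hpow2 : 2 * 2 ^ (α - 2) = 2 ^ (α - 1) := by
    rw [← pow_succ']
    congr 1; omega
  have hpow3 : 2 ^ (α - 1) * 2 = 2 ^ α := by
    rw [← pow_succ]
    congr 1; omega
  have key : ∀ j : ℕ, ((2 ^ (α - 1) * j : ℕ) : ZMod (2 ^ α)) = 0 ∨
      ((2 ^ (α - 1) * j : ℕ) : ZMod (2 ^ α)) = ((2 ^ (α - 1) : ℕ) : ZMod (2 ^ α)) := by
    intro j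
    rcases Nat.even_or_odd j with ⟨i, hi⟩ | ⟨i, hi⟩
    · left
      rw [ZMod.natCast_eq_zero_iff]
      exact ⟨i, by rw [hi]; rw [← hpow3]; ring⟩
    · right
      have : (2 ^ (α - 1) * j : ℕ) = 2 ^ α * i + 2 ^ (α - 1) := by
        rw [hi, ← hpow3]; ring
      rw [this, Nat.cast_add, Nat.cast_mul, ZMod.natCast_self, zero_mul, zero_add]
  -- split which factor is divisible
  have main : 2 ^ (α - 2) ∣ k ∨ 2 ^ (α - 2) ∣ (k + 1) := by
    rcases Nat.even_or_odd k with he | ho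
    · left
      obtain ⟨i, hi⟩ := he
      have hco : Nat.Coprime 2 (k + 1) :=
        (Nat.Prime.coprime_iff_not_dvd Nat.prime_two).mpr (by omega)
      exact (Nat.Coprime.pow_left _ hco).dvd_of_dvd_mul_right hdvd3
    · right
      obtain ⟨i, hi⟩ := ho
      have hco : Nat.Coprime 2 k :=
        (Nat.Prime.coprime_iff_not_dvd Nat.prime_two).mpr (by omega)
      exact (Nat.Coprime.pow_left _ hco).dvd_of_dvd_mul_left hdvd3
  rcases main with ⟨j, hj⟩ | ⟨j, hj⟩
  · -- v = 2^(α-1) j + 1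
    have hv : v = 2 ^ (α - 1) * j + 1 := by
      rw [hk, hj, ← hpow2]; ring
    rcases key j with h0 | h0
    · left
      rw [← hxv, hv]; push_cast at h0 ⊢; rw [h0]; ring
    · right; right; left
      rw [← hxv, hv]; push_cast at h0 ⊢; rw [h0]
  · -- v + 1 = 2^(α-1) j
    have hv : v + 1 = 2 ^ (α - 1) * j := by
      calc v + 1 = 2 * (k + 1) := by omega
      _ = 2 * (2 ^ (α - 2) * j) := by rw [hj]
      _ = 2 ^ (α - 1) * j := by rw [← hpow2]; ring
    have hx1 : x + 1 = ((2 ^ (α - 1) * j : ℕ) : ZMod (2 ^ α)) := by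
      rw [← hxv, ← hv]; push_cast; ring
    rcases key j with h0 | h0
    · right; left
      rw [h0] at hx1
      exact eq_neg_of_add_eq_zero_left hx1
    · right; right; right
      rw [h0] at hx1
      exact eq_sub_of_add_eq hx1

private lemma gauss_units_prod (α : ℕ) (hα : 3 ≤ α) :
    ∏ u : (ZMod (2 ^ α))ˣ, u = 1 := by
  haveI : NeZero (2 ^ α) := ⟨pow_ne_zero _ two_ne_zero⟩
  have h8 : 8 ≤ 2 ^ α := by
    calc (8:ℕ) = 2 ^ 3 := by norm_num
    _ ≤ 2 ^ α := Nat.pow_le_pow_right (by norm_num) hα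
  have hB4 : 4 ≤ 2 ^ (α - 1) := by
    calc (4:ℕ) = 2 ^ 2 := by norm_num
    _ ≤ 2 ^ (α - 1) := Nat.pow_le_pow_right (by norm_num) (by omega)
  have hAB : 2 ^ (α - 1) * 2 = 2 ^ α := by
    rw [← pow_succ]; congr 1; omega
  set h : ZMod (2 ^ α) := ((2 ^ (α - 1) : ℕ) : ZMod (2 ^ α)) with hh
  have hhh : h * h = 0 := by
    rw [hh, ← Nat.cast_mul, ZMod.natCast_eq_zero_iff]
    exact ⟨2 ^ (α - 2), by rw [← pow_add, ← pow_add]; congr 1; omega⟩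
  have hh2 : h * 2 = 0 := by
    have h2 : ((2:ℕ) : ZMod (2 ^ α)) = (2 : ZMod (2 ^ α)) := by norm_cast
    rw [hh, ← h2, ← Nat.cast_mul, ZMod.natCast_eq_zero_iff, hAB]
  have p3 : (h + 1) * (h + 1) = 1 := by linear_combination hhh + hh2
  have p4 : (h - 1) * (h - 1) = 1 := by linear_combination hhh - hh2
  set u3 : (ZMod (2 ^ α))ˣ := ⟨h + 1, h + 1, p3, p3⟩ with hu3
  set u4 : (ZMod (2 ^ α))ˣ := ⟨h - 1, h - 1, p4, p4⟩ with hu4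
  have hinj : ∀ a b : ℕ, a < 2 ^ α → b < 2 ^ α → ((a : ZMod (2 ^ α)) = b) → a = b := by
    intro a b ha hb e
    have := congrArg ZMod.val e
    rwa [ZMod.val_cast_of_lt ha, ZMod.val_cast_of_lt hb] at this
  have e1 : (1 : ZMod (2 ^ α)) = ((1 : ℕ) : ZMod (2 ^ α)) := by norm_cast
  have e2 : (-1 : ZMod (2 ^ α)) = ((2 ^ α - 1 : ℕ) : ZMod (2 ^ α)) := by
    rw [Nat.cast_sub (by omega), ZMod.natCast_self, Nat.cast_one, zero_sub]
  have e3 : h + 1 = ((2 ^ (α - 1) + 1 : ℕ) : ZMod (2 ^ α)) := by rw [hh]; push_cast; ring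
  have e4 : h - 1 = ((2 ^ (α - 1) - 1 : ℕ) : ZMod (2 ^ α)) := by
    rw [Nat.cast_sub (by omega), hh, Nat.cast_one]
  have d12 : (1 : ZMod (2 ^ α)) ≠ -1 := by
    rw [e2, e1]; intro e; have := hinj _ _ (by omega) (by omega) e; omega
  have d13 : (1 : ZMod (2 ^ α)) ≠ h + 1 := by
    rw [e3, e1]; intro e; have := hinj _ _ (by omega) (by omega) e; omega
  have d14 : (1 : ZMod (2 ^ α)) ≠ h - 1 := by
    rw [e4, e1]; intro e; have := hinj _ _ (by omega) (by omega) e; omega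
  have d23 : (-1 : ZMod (2 ^ α)) ≠ h + 1 := by
    rw [e2, e3]; intro e; have := hinj _ _ (by omega) (by omega) e; omega
  have d24 : (-1 : ZMod (2 ^ α)) ≠ h - 1 := by
    rw [e2, e4]; intro e; have := hinj _ _ (by omega) (by omega) e; omega
  have d34 : (h + 1 : ZMod (2 ^ α)) ≠ h - 1 := by
    rw [e3, e4]; intro e; have := hinj _ _ (by omega) (by omega) e; omega
  have hsq_units : ∀ u : (ZMod (2 ^ α))ˣ, u⁻¹ = u ↔ (u = 1 ∨ u = -1 ∨ u = u3 ∨ u = u4) := by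
    intro u
    constructor
    · intro he
      have hu : u * u = 1 := by nth_rewrite 2 [← he]; simp
      have hmul : (u : ZMod (2 ^ α)) * (u : ZMod (2 ^ α)) = 1 := by
        rw [← Units.val_mul, hu, Units.val_one]
      rcases gauss_core α hα (u : ZMod (2 ^ α)) hmul with h1 | h1 | h1 | h1
      · exact Or.inl (Units.ext (by simpa using h1))
      · exact Or.inr (Or.inl (Units.ext (by simpa using h1)))
      · exact Or.inr (Or.inr (Or.inl (Units.ext h1)))
      · exact Or.inr (Or.inr (Or.inr (Units.ext h1)))
    · rintro (rfl | rfl | rfl | rfl)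
      · simp
      · exact inv_eq_of_mul_eq_one_right (by simp)
      · exact inv_eq_of_mul_eq_one_right (Units.ext (by rw [Units.val_mul]; exact p3))
      · exact inv_eq_of_mul_eq_one_right (Units.ext (by rw [Units.val_mul]; exact p4))
  classical
  have hT : ∏ u ∈ Finset.univ.filter (fun u : (ZMod (2 ^ α))ˣ => ¬ u⁻¹ = u), u = 1 := by
    refine Finset.prod_involution (fun a _ => a⁻¹) (fun a _ => by simp) ?_ ?_ ?_
    · intro a ha _; exact (Finset.mem_filter.mp ha).2
    · intro a ha
      simp only [Finset.mem_filter, Finset.mem_univ, true_and] at ha ⊢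
      intro e; apply ha; rw [inv_inv] at e; exact e.symm
    · intro a ha; exact inv_inv a
  have hsplit : ∏ u : (ZMod (2 ^ α))ˣ, u =
      ∏ u ∈ Finset.univ.filter (fun u : (ZMod (2 ^ α))ˣ => u⁻¹ = u), u := by
    rw [← Finset.prod_filter_mul_prod_filter_not Finset.univ
      (fun u : (ZMod (2 ^ α))ˣ => u⁻¹ = u) (fun u => u), hT, mul_one]
  have hS : Finset.univ.filter (fun u : (ZMod (2 ^ α))ˣ => u⁻¹ = u) = {1, -1, u3, u4} := by
    ext u
    simp only [Finset.mem_filter, Finset.mem_univ, true_and, Finset.mem_insert,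
      Finset.mem_singleton]
    exact hsq_units u
  have hne12 : (1 : (ZMod (2 ^ α))ˣ) ≠ -1 := fun e => d12 (by simpa using congrArg Units.val e)
  have hne13 : (1 : (ZMod (2 ^ α))ˣ) ≠ u3 := fun e => d13 (by simpa [hu3] using congrArg Units.val e)
  have hne14 : (1 : (ZMod (2 ^ α))ˣ) ≠ u4 := fun e => d14 (by simpa using congrArg Units.val e)
  have hne23 : (-1 : (ZMod (2 ^ α))ˣ) ≠ u3 := fun e => d23 (by simpa using congrArg Units.val e)
  have hne24 : (-1 : (ZMod (2 ^ α))ˣ) ≠ u4 := fun e => d24 (by simpa using congrArg Units.val e)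
  have hne34 : u3 ≠ u4 := fun e => d34 (by simpa using congrArg Units.val e)
  rw [hsplit, hS]
  rw [Finset.prod_insert (by simp [hne12, hne13, hne14]),
    Finset.prod_insert (by simp [hne23, hne24]),
    Finset.prod_insert (by simp [hne34]), Finset.prod_singleton]
  refine Units.ext ?_
  rw [one_mul, Units.val_mul, Units.val_mul, Units.val_neg, Units.val_one]
  show (-1 : ZMod (2 ^ α)) * ((h + 1) * (h - 1)) = 1
  linear_combination -hhh

theorem gauss_power_of_two (m : ℕ) (hpow : ∃ α : ℕ, m = 2 ^ α) (hm : 8 ≤ m) :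
    (∏ c ∈ (Finset.range m).filter (fun c => Nat.Coprime c m), (c : ℤ)) ≡ 1 [ZMOD m] := by
  obtain ⟨α, rfl⟩ := hpow
  have hα : 3 ≤ α := by
    have : (2:ℕ) ^ 3 ≤ 2 ^ α := by norm_num; omega
    exact (Nat.pow_le_pow_iff_right (by norm_num)).mp this
  haveI : NeZero (2 ^ α) := ⟨pow_ne_zero _ two_ne_zero⟩
  rw [← ZMod.intCast_eq_intCast_iff]
  push_cast
  have hbij : ∏ c ∈ (Finset.range (2 ^ α)).filter (fun c => Nat.Coprime c (2 ^ α)),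
      ((c : ℕ) : ZMod (2 ^ α)) = ∏ u : (ZMod (2 ^ α))ˣ, (u : ZMod (2 ^ α)) := by
    symm
    refine Finset.prod_bij (fun u _ => (u : ZMod (2 ^ α)).val) ?_ ?_ ?_ ?_
    · intro u _
      simp only [Finset.mem_filter, Finset.mem_range]
      exact ⟨ZMod.val_lt _, ZMod.val_coe_unit_coprime u⟩
    · intro a _ b _ hab
      exact Units.ext (ZMod.val_injective _ hab)
    · intro c hc
      simp only [Finset.mem_filter, Finset.mem_range] at hc
      refine ⟨ZMod.unitOfCoprime c hc.2, Finset.mem_univ _, ?_⟩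
      simp [ZMod.coe_unitOfCoprime, ZMod.val_cast_of_lt hc.1]
    · intro u _
      exact (ZMod.natCast_zmod_val _).symm
  rw [hbij]
  have hmap := map_prod (Units.coeHom (ZMod (2 ^ α))) (fun u => u) Finset.univ
  simp only [Units.coeHom_apply] at hmap
  rw [← hmap, gauss_units_prod α hα]
  simp
end

section
/- If m is a positive integer that is not of the form 1, 2, 4, p^β, or 2p^β (p an odd prime, β ≥ 1), then the product of all residues modulo m coprime to m is congruent to +1 modulo m. -/
open Finset

lemma aux_closed {G : Type*} [CommGroup G] [DecidableEq G] (a b : G)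
    (ha : a * a = 1) (hb : b * b = 1) (ha1 : a ≠ 1) (hb1 : b ≠ 1) (hab : a ≠ b) :
    ∀ n (T : Finset G), T.card ≤ n → (∀ x ∈ T, x * x = 1) →
      (∀ x ∈ T, a * x ∈ T) → (∀ x ∈ T, b * x ∈ T) → ∏ x ∈ T, x = 1 := by
  have ne_self : ∀ u : G, u ≠ 1 → ∀ y : G, u * y ≠ y := by
    intro u hu y h
    exact hu (mul_right_cancel (by rw [h, one_mul] : u * y = 1 * y))
  have haa : ∀ x : G, a * (a * x) = x := fun x => by rw [← mul_assoc, ha, one_mul]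
  have hbb : ∀ x : G, b * (b * x) = x := fun x => by rw [← mul_assoc, hb, one_mul]
  have hab1 : a * b ≠ 1 := fun h =>
    hab (by rw [← mul_one a, ← hb, ← mul_assoc, h, one_mul])
  intro n
  induction n with
  | zero => intro T hT _ _ _; simp [Finset.card_eq_zero.mp (Nat.le_zero.mp hT)]
  | succ n ih =>
    intro T hT hsq hca hcb
    obtain rfl | ⟨x₀, hx₀⟩ := T.eq_empty_or_nonempty
    · simp
    have hx₀sq := hsq x₀ hx₀
    have hxx : ∀ y : G, x₀ * (x₀ * y) = y := fun y => by
      rw [← mul_assoc, hx₀sq, one_mul]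
    set F : Finset G := {x₀, a * x₀, b * x₀, a * (b * x₀)} with hF
    have hFsub : F ⊆ T := by
      intro y hy
      simp only [hF, mem_insert, mem_singleton] at hy
      rcases hy with rfl | rfl | rfl | rfl
      exacts [hx₀, hca _ hx₀, hcb _ hx₀, hca _ (hcb _ hx₀)]
    have d1 : a * x₀ ≠ x₀ := ne_self a ha1 x₀
    have d2 : b * x₀ ≠ x₀ := ne_self b hb1 x₀
    have d3 : a * (b * x₀) ≠ x₀ := by
      rw [← mul_assoc]; exact ne_self (a * b) hab1 x₀
    have d4 : a * x₀ ≠ b * x₀ := fun h => hab (mul_right_cancel h)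
    have d5 : a * (b * x₀) ≠ a * x₀ := fun h => d2 (mul_left_cancel h)
    have d6 : a * (b * x₀) ≠ b * x₀ := ne_self a ha1 _
    have hFprod : ∏ x ∈ F, x = 1 := by
      rw [hF, prod_insert (by simp [d1.symm, d2.symm, d3.symm]),
        prod_insert (by simp [d4, d5.symm]), prod_insert (by simp [d6.symm]),
        prod_singleton]
      simp [mul_comm, mul_left_comm, mul_assoc, haa, hbb, hxx, hx₀sq, ha, hb]
    have hFne : F.Nonempty := ⟨x₀, by simp [hF]⟩
    have hcard : (T \ F).card < T.card := card_lt_card (Finset.sdiff_ssubset hFsub hFne)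
    have hrest : ∏ x ∈ T \ F, x = 1 := by
      apply ih
      · omega
      · exact fun x hx => hsq x (mem_sdiff.mp hx).1
      · intro x hx
        rw [mem_sdiff] at hx ⊢
        refine ⟨hca x hx.1, fun hmem => hx.2 ?_⟩
        simp only [hF, mem_insert, mem_singleton] at hmem ⊢
        rcases hmem with h | h | h | h
        · right; left; rw [← haa x, h]
        · left; exact mul_left_cancel h
        · right; right; right; rw [← haa x, h]
        · right; right; left; exact mul_left_cancel h
      · intro x hx
        rw [mem_sdiff] at hx ⊢
        refine ⟨hcb x hx.1, fun hmem => hx.2 ?_⟩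
        simp only [hF, mem_insert, mem_singleton] at hmem ⊢
        rcases hmem with h | h | h | h
        · right; right; left; rw [← hbb x, h]
        · right; right; right; rw [← hbb x, h, mul_left_comm]
        · left; exact mul_left_cancel h
        · right; left
          rw [← hbb x, h, mul_left_comm, hbb]
    calc ∏ x ∈ T, x = (∏ x ∈ T \ F, x) * ∏ x ∈ F, x := (prod_sdiff hFsub).symm
      _ = 1 := by rw [hFprod, hrest, one_mul]

lemma prod_univ_eq_one_of_two_involutions {G : Type*} [CommGroup G] [Fintype G]
    [DecidableEq G] (a b : G)
    (ha : a * a = 1) (hb : b * b = 1) (ha1 : a ≠ 1) (hb1 : b ≠ 1) (hab : a ≠ b) :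
    ∏ g : G, g = 1 := by
  classical
  have hsplit := Finset.prod_filter_mul_prod_filter_not Finset.univ
    (fun x : G => x * x = 1) id
  have h1 : ∏ x ∈ Finset.univ.filter (fun x : G => x * x = 1), x = 1 := by
    apply aux_closed a b ha hb ha1 hb1 hab
      (Finset.univ.filter (fun x : G => x * x = 1)).card _ le_rfl
    · intro x hx; simpa using (Finset.mem_filter.mp hx).2
    · intro x hx
      simp only [Finset.mem_filter, Finset.mem_univ, true_and] at hx ⊢
      calc a * x * (a * x) = (a * a) * (x * x) := by
            rw [mul_assoc, mul_left_comm x a x, ← mul_assoc]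
        _ = 1 := by rw [ha, hx, one_mul]
    · intro x hx
      simp only [Finset.mem_filter, Finset.mem_univ, true_and] at hx ⊢
      calc b * x * (b * x) = (b * b) * (x * x) := by
            rw [mul_assoc, mul_left_comm x b x, ← mul_assoc]
        _ = 1 := by rw [hb, hx, one_mul]
  have h2 : ∏ x ∈ Finset.univ.filter (fun x : G => ¬ x * x = 1), x = 1 := by
    refine Finset.prod_involution (fun x _ => x⁻¹) (fun x _ => mul_inv_cancel x)
      ?_ ?_ (fun x _ => inv_inv x)
    · intro x hx _
      simp only [Finset.mem_filter, Finset.mem_univ, true_and] at hx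
      intro h
      exact hx (by nth_rewrite 2 [← h]; exact mul_inv_cancel x)
    · intro x hx
      simp only [Finset.mem_filter, Finset.mem_univ, true_and] at hx ⊢
      intro h
      apply hx
      have := congrArg (fun y : G => y⁻¹) h
      simpa using this
  simp only [id] at hsplit
  rw [← hsplit, h1, h2, one_mul]

lemma units_neg_one_mul_self {R : Type*} [Monoid R] [HasDistribNeg R] :
    (-1 : Rˣ) * (-1) = 1 := by
  ext
  push_cast
  simp

lemma exists_invols_of_split (u v : ℕ) (hu : 3 ≤ u) (hv : 3 ≤ v) (hco : Nat.Coprime u v) :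
    ∃ a b : (ZMod (u * v))ˣ, a * a = 1 ∧ b * b = 1 ∧ a ≠ 1 ∧ b ≠ 1 ∧ a ≠ b := by
  haveI : Fact (2 < u) := ⟨hu⟩
  haveI : Fact (2 < v) := ⟨hv⟩
  let E : (ZMod (u * v))ˣ ≃* (ZMod u)ˣ × (ZMod v)ˣ :=
    (Units.mapEquiv (ZMod.chineseRemainder hco).toMulEquiv).trans MulEquiv.prodUnits
  have hneg1u : (-1 : (ZMod u)ˣ) ≠ 1 := by
    intro h
    apply ZMod.neg_one_ne_one (n := u)
    have := congrArg (Units.val) h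
    simpa using this
  have hneg1v : (-1 : (ZMod v)ˣ) ≠ 1 := by
    intro h
    apply ZMod.neg_one_ne_one (n := v)
    have := congrArg (Units.val) h
    simpa using this
  refine ⟨E.symm (-1, 1), E.symm (1, -1), ?_, ?_, ?_, ?_, ?_⟩
  · rw [← map_mul, Prod.mk_mul_mk, units_neg_one_mul_self, one_mul, ← Prod.one_eq_mk,
      map_one]
  · rw [← map_mul, Prod.mk_mul_mk, units_neg_one_mul_self, one_mul, ← Prod.one_eq_mk,
      map_one]
  · intro h
    rw [← map_one E.symm] at h
    have := E.symm.injective h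
    exact hneg1u (congrArg Prod.fst this)
  · intro h
    rw [← map_one E.symm] at h
    have := E.symm.injective h
    exact hneg1v (congrArg Prod.snd this)
  · intro h
    have := E.symm.injective h
    exact hneg1u (congrArg Prod.fst this)

lemma exists_two_involutions (m : ℕ) (hm : 0 < m)
    (hA : ¬ (m = 1 ∨ m = 2 ∨ m = 4 ∨
      ∃ p β : ℕ, p.Prime ∧ Odd p ∧ 1 ≤ β ∧ (m = p ^ β ∨ m = 2 * p ^ β))) :
    ∃ a b : (ZMod m)ˣ, a * a = 1 ∧ b * b = 1 ∧ a ≠ 1 ∧ b ≠ 1 ∧ a ≠ b := by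
  push_neg at hA
  obtain ⟨hm1, hm2, hm4, hrest⟩ := hA
  by_cases hodd : ∃ p : ℕ, p.Prime ∧ p ≠ 2 ∧ p ∣ m
  · -- m has an odd prime factor p ; m = p^α * t with t ≥ 3 coprime to p^α
    obtain ⟨p, hp, hp2, hpm⟩ := hodd
    have hpodd : Odd p := hp.odd_of_ne_two hp2
    set α := m.factorization p with hα
    have hα1 : 1 ≤ α := hp.factorization_pos_of_dvd hm.ne' hpm
    set q := p ^ α with hq
    set t := m / q with ht
    have hmqt : m = q * t := (Nat.ordProj_mul_ordCompl_eq_self m p).symm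
    have hpt : ¬ p ∣ t := Nat.not_dvd_ordCompl hp hm.ne'
    have hco : Nat.Coprime q t :=
      Nat.Coprime.pow_left α ((Nat.Prime.coprime_iff_not_dvd hp).mpr hpt)
    have hp3 : 3 ≤ p := by
      rcases hp.two_le.lt_or_eq with h | h
      · omega
      · exact absurd h.symm hp2
    have hq3 : 3 ≤ q := le_trans hp3 (Nat.le_self_pow (by omega) p)
    clear_value t
    have ht3 : 3 ≤ t := by
      have ht0 : t ≠ 0 := by
        intro h; rw [h, mul_zero] at hmqt; omega
      have ht1 : t ≠ 1 := by
        intro h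
        exact (hrest p α hp hpodd hα1).1 (by rw [hmqt, h, mul_one])
      have ht2 : t ≠ 2 := by
        intro h
        exact (hrest p α hp hpodd hα1).2 (by rw [hmqt, h, mul_comm])
      omega
    obtain ⟨a, b, h⟩ := exists_invols_of_split q t hq3 ht3 hco
    rw [hmqt]
    exact ⟨a, b, h⟩
  · -- m is a power of two, m = 2 ^ k with k ≥ 3
    push_neg at hodd
    have h2 : ∀ {d : ℕ}, d.Prime → d ∣ m → d = 2 := by
      intro d hd hdm
      by_contra hne
      exact (hodd d hd hne) hdm
    have hm2pow := Nat.eq_prime_pow_of_unique_prime_dvd hm.ne' h2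
    obtain ⟨k, rfl⟩ : ∃ k, m = 2 ^ k := ⟨_, hm2pow⟩
    have hk3 : 3 ≤ k := by
      by_contra hlt
      interval_cases k
      · exact hm1 (by norm_num)
      · exact hm2 (by norm_num)
      · exact hm4 (by norm_num)
    have hkk : 2 * (k - 1) = k + (k - 2) := by omega
    haveI : Fact (1 < 2 ^ k) := ⟨by calc 1 < 8 := by norm_num
                                        _ = 2 ^ 3 := by norm_num
                                        _ ≤ 2 ^ k := Nat.pow_le_pow_right (by norm_num) hk3⟩
    haveI : Fact (2 < 2 ^ k) := ⟨by calc 2 < 8 := by norm_num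
                                          _ = 2 ^ 3 := by norm_num
                                          _ ≤ 2 ^ k := Nat.pow_le_pow_right (by norm_num) hk3⟩
    have hcop : Nat.Coprime (2 ^ (k - 1) - 1) (2 ^ k) := by
      apply Nat.Coprime.pow_right
      rw [Nat.coprime_two_right]
      have h1 : 2 ≤ 2 ^ (k - 1) := by
        calc 2 = 2 ^ 1 := by norm_num
        _ ≤ 2 ^ (k - 1) := Nat.pow_le_pow_right (by norm_num) (by omega)
      have heven : Even (2 ^ (k-1)) := by
        refine (Nat.even_pow).mpr ⟨by norm_num, by omega⟩
      exact Nat.Even.sub_odd (by omega) heven odd_one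
    set b : (ZMod (2 ^ k))ˣ := ZMod.unitOfCoprime _ hcop with hbdef
    have hbval : (b : ZMod (2 ^ k)) = (2 : ZMod (2 ^ k)) ^ (k - 1) - 1 := by
      rw [hbdef, ZMod.coe_unitOfCoprime]
      push_cast [Nat.one_le_two_pow]
      ring
    have htt : (2 : ZMod (2 ^ k)) ^ (k - 1) * 2 ^ (k - 1) = 0 := by
      rw [← pow_add]
      have : ((2 ^ ((k-1) + (k-1)) : ℕ) : ZMod (2 ^ k)) = 0 := by
        rw [ZMod.natCast_eq_zero_iff]
        exact pow_dvd_pow 2 (by omega)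
      push_cast at this
      exact this
    have h2t : (2 : ZMod (2 ^ k)) * 2 ^ (k - 1) = 0 := by
      have : ((2 ^ k : ℕ) : ZMod (2 ^ k)) = 0 := by
        rw [ZMod.natCast_eq_zero_iff]
      have hh : (2 : ZMod (2 ^ k)) * 2 ^ (k - 1) = 2 ^ k := by
        rw [← pow_succ']
        congr 1
        omega
      rw [hh]
      push_cast at this
      exact this
    have hbsq : b * b = 1 := by
      ext
      push_cast
      rw [hbval]
      have expand : ((2 : ZMod (2 ^ k)) ^ (k - 1) - 1) * ((2 : ZMod (2 ^ k)) ^ (k - 1) - 1)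
          = 2 ^ (k-1) * 2 ^ (k-1) - 2 * 2 ^ (k-1) + 1 := by ring
      rw [expand, htt, h2t]
      ring
    have hb1 : b ≠ 1 := by
      intro h
      have := congrArg (Units.val) h
      rw [hbdef] at this
      simp only [ZMod.coe_unitOfCoprime, Units.val_one] at this
      have hval := congrArg ZMod.val this
      rw [ZMod.val_cast_of_lt, ZMod.val_one] at hval
      · have : 2 ^ (k - 1) = 2 := by omega
        have hk2 : k - 1 = 1 := by
          by_contra hne
          have : 2 ≤ k - 1 := by omega
          have : 2 ^ 2 ≤ 2 ^ (k-1) := Nat.pow_le_pow_right (by norm_num) this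
          omega
        omega
      · have : 2 ^ (k - 1) < 2 ^ k := Nat.pow_lt_pow_right (by norm_num) (by omega)
        omega
    have hbneg : b ≠ -1 := by
      intro h
      have := congrArg (Units.val) h
      rw [hbval] at this
      simp only [Units.val_neg, Units.val_one] at this
      have h0 : (2 : ZMod (2 ^ k)) ^ (k - 1) = 0 := by
        rw [sub_eq_iff_eq_add] at this
        rw [this]; ring
      have : ((2 ^ (k - 1) : ℕ) : ZMod (2 ^ k)) = 0 := by push_cast; exact h0
      rw [ZMod.natCast_eq_zero_iff] at this
      have := Nat.le_of_dvd (by positivity) this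
      have : 2 ^ (k - 1) < 2 ^ k := Nat.pow_lt_pow_right (by norm_num) (by omega)
      omega
    refine ⟨-1, b, units_neg_one_mul_self, hbsq, ?_, hb1, fun h => hbneg h.symm⟩
    intro h
    apply ZMod.neg_one_ne_one (n := 2 ^ k)
    have := congrArg (Units.val) h
    simpa using this

theorem gauss_not_in_A (m : ℕ) (hm : 0 < m)
    (hA : ¬ (m = 1 ∨ m = 2 ∨ m = 4 ∨
      ∃ p β : ℕ, p.Prime ∧ Odd p ∧ 1 ≤ β ∧ (m = p ^ β ∨ m = 2 * p ^ β))) :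
    (∏ c ∈ (Finset.range m).filter (fun c => Nat.Coprime c m), (c : ℤ)) ≡ 1 [ZMOD m] := by
  haveI : NeZero m := ⟨hm.ne'⟩
  rw [← ZMod.intCast_eq_intCast_iff]
  push_cast
  have key : ∏ c ∈ (Finset.range m).filter (fun c => Nat.Coprime c m), ((c : ℕ) : ZMod m)
      = ∏ u : (ZMod m)ˣ, ((u : ZMod m)) := by
    refine Finset.prod_bij' (fun c hc => ZMod.unitOfCoprime c
        (Finset.mem_filter.mp hc).2)
      (fun u _ => (u : ZMod m).val) (fun c hc => Finset.mem_univ _)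
      (fun u _ => ?_) (fun c hc => ?_) (fun u _ => ?_) (fun c hc => ?_)
    · rw [Finset.mem_filter, Finset.mem_range]
      exact ⟨ZMod.val_lt _, ZMod.val_coe_unit_coprime u⟩
    · have hc' := Finset.mem_filter.mp hc
      have : c < m := Finset.mem_range.mp hc'.1
      simp only [ZMod.coe_unitOfCoprime]
      exact ZMod.val_cast_of_lt this
    · ext
      simp only [ZMod.coe_unitOfCoprime]
      exact ZMod.natCast_rightInverse _
    · simp only [ZMod.coe_unitOfCoprime]
  rw [key]
  obtain ⟨a, b, ha, hb, ha1, hb1, hab⟩ := exists_two_involutions m hm hA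
  have h1 := prod_univ_eq_one_of_two_involutions a b ha hb ha1 hb1 hab
  calc ∏ u : (ZMod m)ˣ, (u : ZMod m)
      = (((∏ u : (ZMod m)ˣ, u) : (ZMod m)ˣ) : ZMod m) :=
        (map_prod (Units.coeHom (ZMod m)) (fun u => u) Finset.univ).symm
    _ = 1 := by rw [h1]; simp
end

section
/- Let m be a nonzero integer with prime factorization involving primes p_1, ..., p_r, let x be an integer, and let d be the product of p_i^{α_i} over those primes p_i dividing both x and m (with α_i the exponent of p_i in m). Define L(x, m) = ∏ (x + c) over all residues c modulo m coprime to m. Then L(x, m) ≡ 0 (mod m/d). -/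
/-- For a prime `p` dividing `n` with `p ∤ x` (over ℤ), there is a residue `c < n`
coprime to `n` with `p ^ (n.factorization p) ∣ x + c`. -/
lemma exists_residue (n : ℕ) (hn : 0 < n) (x : ℤ) (p : ℕ) (hp : p.Prime)
    (hpn : p ∣ n) (hpx : ¬ (p : ℤ) ∣ x) :
    ∃ c ∈ (Finset.range n).filter (fun c => Nat.Coprime c n),
      (p : ℤ) ^ (n.factorization p) ∣ x + (c : ℤ) := by
  set α := n.factorization p with hα
  have hαpos : 0 < α := hp.factorization_pos_of_dvd hn.ne' hpn
  set t := n / p ^ α with ht_def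
  have hdvd : p ^ α ∣ n := Nat.ordProj_dvd n p
  have hnt : p ^ α * t = n := Nat.mul_div_cancel' hdvd
  have hpt : ¬ p ∣ t := Nat.not_dvd_ordCompl hp hn.ne'
  have hcop : Nat.Coprime (p ^ α) t :=
    Nat.Coprime.pow_left α ((Nat.Prime.coprime_iff_not_dvd hp).mpr hpt)
  have hcopZ : IsCoprime ((p : ℤ) ^ α) (t : ℤ) := by
    have := Nat.isCoprime_iff_coprime.mpr hcop
    push_cast at this ⊢
    exact this
  obtain ⟨u, v, huv⟩ := hcopZ
  set c0 : ℤ := -x * (v * t) + u * (p : ℤ) ^ α with hc0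
  have h1 : ((p : ℤ) ^ α) ∣ c0 + x := by
    have : c0 + x = (x + 1) * u * (p : ℤ) ^ α := by
      have hvt : v * t = 1 - u * (p : ℤ) ^ α := by linarith [huv]
      rw [hc0, hvt]; ring
    exact ⟨(x+1)*u, by linarith [this]⟩
  have h2 : (t : ℤ) ∣ c0 - 1 := by
    have : c0 - 1 = (-(x + 1) * v) * t := by
      have hup : u * (p : ℤ) ^ α = 1 - v * t := by linarith [huv]
      rw [hc0, hup]; ring
    exact ⟨-(x+1)*v, by linarith [this]⟩
  set c : ℤ := c0 % (n : ℤ) with hc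
  have hnz : (n : ℤ) ≠ 0 := by exact_mod_cast hn.ne'
  have hc0le : 0 ≤ c := Int.emod_nonneg _ hnz
  have hclt : c < n := Int.emod_lt_of_pos _ (by exact_mod_cast hn)
  have hcmod : (n : ℤ) ∣ c0 - c := by
    have h : c ≡ c0 [ZMOD (n : ℤ)] := Int.emod_emod_of_dvd c0 dvd_rfl
    exact h.dvd
  have hpc : ((p : ℤ) ^ α) ∣ c + x := by
    have h3 : ((p : ℤ) ^ α) ∣ c0 - c := (dvd_trans (by exact_mod_cast hdvd) hcmod)
    have : c + x = (c0 + x) - (c0 - c) := by ring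
    rw [this]; exact dvd_sub h1 h3
  have htc : (t : ℤ) ∣ c - 1 := by
    have h3 : (t : ℤ) ∣ c0 - c :=
      dvd_trans (by exact_mod_cast (⟨p ^ α, by rw [← hnt]; ring⟩ : t ∣ n)) hcmod
    have : c - 1 = (c0 - 1) - (c0 - c) := by ring
    rw [this]; exact dvd_sub h2 h3
  refine ⟨c.toNat, ?_, ?_⟩
  · have hcast : ((c.toNat : ℤ)) = c := Int.toNat_of_nonneg hc0le
    rw [Finset.mem_filter, Finset.mem_range]
    constructor
    · exact_mod_cast hcast ▸ hclt
    · -- coprimality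
      rw [Nat.coprime_comm]
      by_contra hcon
      obtain ⟨r, hr, hrd⟩ := Nat.exists_prime_and_dvd hcon
      have hrn : r ∣ n := hrd.trans (Nat.gcd_dvd_left _ _)
      have hrc : (r : ℤ) ∣ c := by
        have : r ∣ c.toNat := hrd.trans (Nat.gcd_dvd_right _ _)
        exact_mod_cast hcast ▸ (Int.natCast_dvd_natCast.mpr this)
      by_cases hrp : r = p
      · subst hrp
        have hpα : (r : ℤ) ∣ (r : ℤ) ^ α := dvd_pow_self _ hαpos.ne'
        have : (r : ℤ) ∣ x := by
          have := (hpα.trans hpc)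
          have hx : x = (c + x) - c := by ring
          rw [hx]; exact dvd_sub this hrc
        exact hpx this
      · have hrt : r ∣ t := by
          have := hrn
          rw [← hnt] at this
          rcases hr.dvd_mul.mp this with h | h
          · exact absurd (hr.dvd_of_dvd_pow h) (by
              intro hdv
              exact hrp ((Nat.prime_dvd_prime_iff_eq hr hp).mp hdv))
          · exact h
        have : (r : ℤ) ∣ 1 := by
          have h4 : (r : ℤ) ∣ c - 1 := (Int.natCast_dvd_natCast.mpr hrt).trans htc
          have : (1 : ℤ) = c - (c - 1) := by ring
          rw [this]; exact dvd_sub hrc h4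
        have := Int.eq_one_of_dvd_one (by positivity) this
        exact hr.one_lt.ne' (by exact_mod_cast this)
  · have hcast : ((c.toNat : ℤ)) = c := Int.toNat_of_nonneg hc0le
    rw [hcast, add_comm]
    exact hpc

theorem theorem1_divisibility (m : ℤ) (hm : m ≠ 0) (x : ℤ)
    (d : ℕ)
    (hd : d = ∏ p ∈ m.natAbs.primeFactors.filter (fun p : ℕ => (p : ℤ) ∣ x),
      p ^ (m.natAbs.factorization p)) :
    ((m.natAbs / d : ℕ) : ℤ) ∣
      ∏ c ∈ (Finset.range m.natAbs).filter (fun c => Nat.Coprime c m.natAbs), (x + (c : ℤ)) := by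
  set n := m.natAbs with hn_def
  have hn : 0 < n := Int.natAbs_pos.mpr hm
  set sx := n.primeFactors.filter (fun p : ℕ => ¬ (p : ℤ) ∣ x) with hsx
  have hdn : d * ∏ p ∈ sx, p ^ (n.factorization p) = n := by
    rw [hd, Finset.prod_filter_mul_prod_filter_not]
    exact Nat.factorization_prod_pow_eq_self hn.ne'
  have hdpos : 0 < d := by
    rw [hd]
    apply Finset.prod_pos
    intro p hp
    exact pow_pos (Nat.pos_of_mem_primeFactors (Finset.mem_filter.mp hp).1) _
  have hquot : n / d = ∏ p ∈ sx, p ^ (n.factorization p) :=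
    Nat.div_eq_of_eq_mul_right hdpos hdn.symm
  rw [hquot]
  push_cast
  apply Finset.prod_dvd_of_coprime
  · intro p hp q hq hpq
    have hpP := Nat.prime_of_mem_primeFactors (Finset.mem_filter.mp hp).1
    have hqP := Nat.prime_of_mem_primeFactors (Finset.mem_filter.mp hq).1
    exact (Nat.isCoprime_iff_coprime.mpr
      ((Nat.coprime_primes hpP hqP).mpr (by exact_mod_cast hpq))).pow
  · intro p hp
    obtain ⟨hp1, hp2⟩ := Finset.mem_filter.mp hp
    have hpP := Nat.prime_of_mem_primeFactors hp1
    have hpn : p ∣ n := Nat.dvd_of_mem_primeFactors hp1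
    obtain ⟨c, hc, hdvd⟩ := exists_residue n hn x p hpP hpn hp2
    exact hdvd.trans (Finset.dvd_prod_of_mem _ hc)
end

section
/- Let m be a nonzero integer not of the form ±1, ±2, ±4, ±p^β, ±2p^β (p odd prime), and let p_i be a prime dividing both x and m, with p_i^{α_i} exactly dividing m. Then ∏ (x + c) ≡ +1 (mod p_i^{α_i}), where the product runs over all residues c modulo |m| coprime to m. -/
open Finset


lemma aux_prod_sq {G : Type*} [CommGroup G] [Fintype G] :
    (∏ u : G, u) * (∏ u : G, u) = 1 := by
  have h2 : (∏ u : G, u)⁻¹ = ∏ u : G, u := by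
    rw [← Finset.prod_inv_distrib]
    exact Fintype.prod_bijective (fun u : G => u⁻¹) (inv_involutive).bijective _ _ (fun x => rfl)
  nth_rewrite 1 [← h2]
  exact inv_mul_cancel _


lemma aux_sq_classify {β : ℕ} (u : ZMod (2 ^ (β + 3))) (hu : IsUnit u) (h : u * u = 1) :
    u = 1 ∨ u = -1 ∨ u = 1 + 2 ^ (β + 2) ∨ u = -(1 + 2 ^ (β + 2)) := by
  haveI : NeZero ((2:ℕ) ^ (β + 3)) := ⟨pow_ne_zero _ two_ne_zero⟩
  have hzero : (2 : ZMod (2 ^ (β + 3))) ^ (β + 3) = 0 := by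
    have := ZMod.natCast_self (2 ^ (β + 3))
    push_cast at this
    exact this
  set v : ℕ := u.val with hv
  have hvu : ((v : ℕ) : ZMod (2 ^ (β + 3))) = u := by
    simp [hv, ZMod.natCast_val, ZMod.cast_id]
  -- v is odd
  have hcop : Nat.Coprime v (2 ^ (β + 3)) := by
    have := ZMod.val_coe_unit_coprime hu.unit
    rwa [hu.unit_spec] at this
  have hodd : ¬ (2 ∣ v) := by
    intro hdvd
    have h2 : (2:ℕ) ∣ Nat.gcd v (2 ^ (β + 3)) := Nat.dvd_gcd hdvd (dvd_pow_self 2 (by omega))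
    rw [hcop] at h2
    omega
  obtain ⟨w, hw⟩ : ∃ w, v = 2 * w + 1 := ⟨v / 2, by omega⟩
  -- divisibility in ℤ
  have hdvd : ((2:ℤ) ^ (β + 3)) ∣ ((v:ℤ) * v - 1) := by
    have : (((2:ℕ) ^ (β + 3) : ℕ) : ℤ) ∣ ((v:ℤ) * v - 1) := by
      rw [← ZMod.intCast_zmod_eq_zero_iff_dvd]
      push_cast
      rw [hvu, h]
      ring
    push_cast at this
    exact this
  have hdvd2 : ((2:ℤ) ^ (β + 1)) ∣ ((w:ℤ) * (w + 1)) := by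
    have h4 : (4:ℤ) * (2 ^ (β + 1)) ∣ 4 * ((w:ℤ) * (w + 1)) := by
      have : (v:ℤ) * v - 1 = 4 * ((w:ℤ) * (w + 1)) := by
        have : (v:ℤ) = 2 * w + 1 := by exact_mod_cast congrArg (Nat.cast : ℕ → ℤ) hw
        rw [this]; ring
      rw [← this]
      convert hdvd using 1
      ring
    exact (mul_dvd_mul_iff_left (by norm_num : (4:ℤ) ≠ 0)).mp h4
  -- case on parity of w
  have key : ((2:ℤ) ^ (β + 2)) ∣ ((v:ℤ) - 1) ∨ ((2:ℤ) ^ (β + 2)) ∣ ((v:ℤ) + 1) := by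
    have hv1 : (v:ℤ) = 2 * w + 1 := by exact_mod_cast congrArg (Nat.cast : ℕ → ℤ) hw
    rcases Nat.even_or_odd w with ⟨j, hj⟩ | ⟨j, hj⟩
    · left
      have hcop2 : IsCoprime ((2:ℤ) ^ (β + 1)) ((w:ℤ) + 1) := by
        apply IsCoprime.pow_left
        exact ⟨-(j:ℤ), 1, by rw [show ((w:ℤ)) = 2 * j by exact_mod_cast congrArg (Nat.cast : ℕ → ℤ) (show w = 2*j by omega)]; ring⟩
      have := hcop2.dvd_of_dvd_mul_right hdvd2
      rw [hv1]
      obtain ⟨c, hc⟩ := this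
      exact ⟨c, by rw [show (2:ℤ)*w+1-1 = 2*(w:ℤ) by ring, hc]; ring⟩
    · right
      have hcop2 : IsCoprime ((2:ℤ) ^ (β + 1)) ((w:ℤ)) := by
        apply IsCoprime.pow_left
        exact ⟨-(j:ℤ), 1, by rw [show ((w:ℤ)) = 2 * j + 1 by exact_mod_cast congrArg (Nat.cast : ℕ → ℤ) hj]; ring⟩
      have := hcop2.dvd_of_dvd_mul_left hdvd2
      rw [hv1]
      obtain ⟨c, hc⟩ := this
      exact ⟨c, by rw [show (2:ℤ)*w+1+1 = 2*((w:ℤ)+1) by ring, hc]; ring⟩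
  -- conclude
  have cast0 : ∀ d : ℤ, (((2:ℤ) ^ (β + 3) * d : ℤ) : ZMod (2 ^ (β + 3))) = 0 := by
    intro d
    push_cast
    rw [hzero]
    ring
  rcases key with ⟨c, hc⟩ | ⟨c, hc⟩
  · rcases Int.even_or_odd c with ⟨d, hd⟩ | ⟨d, hd⟩
    · left
      have : ((v:ℤ) - 1 : ℤ) = 2 ^ (β + 3) * d := by rw [hc, hd]; ring
      have h0 : (((v:ℤ) - 1 : ℤ) : ZMod (2 ^ (β + 3))) = 0 := by rw [this]; exact cast0 d
      push_cast at h0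
      rw [hvu] at h0
      linear_combination h0
    · right; right; left
      have : ((v:ℤ) - 1 : ℤ) = 2 ^ (β + 3) * d + 2 ^ (β + 2) := by rw [hc, hd]; ring
      have h0 : (((v:ℤ) - 1 : ℤ) : ZMod (2 ^ (β + 3))) = 2 ^ (β + 2) := by
        rw [this]; push_cast; rw [hzero]; ring
      push_cast at h0
      rw [hvu] at h0
      linear_combination h0
  · rcases Int.even_or_odd c with ⟨d, hd⟩ | ⟨d, hd⟩
    · right; left
      have : ((v:ℤ) + 1 : ℤ) = 2 ^ (β + 3) * d := by rw [hc, hd]; ring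
      have h0 : (((v:ℤ) + 1 : ℤ) : ZMod (2 ^ (β + 3))) = 0 := by rw [this]; exact cast0 d
      push_cast at h0
      rw [hvu] at h0
      linear_combination h0
    · right; right; right
      have : ((v:ℤ) + 1 : ℤ) = 2 ^ (β + 3) * d + 2 ^ (β + 2) := by rw [hc, hd]; ring
      have h0 : (((v:ℤ) + 1 : ℤ) : ZMod (2 ^ (β + 3))) = 2 ^ (β + 2) := by
        rw [this]; push_cast; rw [hzero]; ring
      push_cast at h0
      rw [hvu] at h0
      -- u + 1 = 2^(β+2); want u = -(1 + 2^(β+2)); need 2^(β+2) = -2^(β+2), i.e. 2^(β+3)=0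
      have h2 : (2:ZMod (2 ^ (β + 3))) ^ (β + 2) + 2 ^ (β + 2) = 0 := by
        have : (2:ZMod (2 ^ (β + 3))) ^ (β + 2) + 2 ^ (β + 2) = 2 ^ (β + 3) := by ring
        rw [this, hzero]
      linear_combination h0 + h2

lemma aux_prod_units_two_pow (β : ℕ) :
    ∏ u : (ZMod (2 ^ (β + 3)))ˣ, u = 1 := by
  classical
  haveI : NeZero ((2:ℕ) ^ (β + 3)) := ⟨pow_ne_zero _ two_ne_zero⟩
  have hzero : (2 : ZMod (2 ^ (β + 3))) ^ (β + 3) = 0 := by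
    have := ZMod.natCast_self (2 ^ (β + 3))
    push_cast at this
    exact this
  set t : ZMod (2 ^ (β + 3)) := 1 + 2 ^ (β + 2) with htdef
  have ht2 : t * t = 1 := by
    have : t * t = 1 + 2 ^ (β + 3) * (1 + 2 ^ (β + 1)) := by rw [htdef]; ring
    rw [this, hzero]; ring
  set T : (ZMod (2 ^ (β + 3)))ˣ := ⟨t, t, ht2, ht2⟩ with hTdef
  -- nonzero elements
  have natne : ∀ a : ℕ, 0 < a → a < 2 ^ (β + 3) → ((a:ℕ) : ZMod (2 ^ (β + 3))) ≠ 0 := by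
    intro a ha hlt h0
    rw [ZMod.natCast_eq_zero_iff] at h0
    have := Nat.le_of_dvd ha h0
    omega
  have h4le : 4 ≤ 2 ^ (β + 2) := by
    calc (4:ℕ) = 2 ^ 2 := rfl
    _ ≤ 2 ^ (β + 2) := Nat.pow_le_pow_right (by norm_num) (by omega)
  have hp23 : (2:ℕ) ^ (β + 3) = 2 * 2 ^ (β + 2) := by ring
  have ne2 : (2 : ZMod (2 ^ (β + 3))) ≠ 0 := by
    have := natne 2 (by norm_num) (by omega)
    push_cast at this; exact this
  have nep : (2 : ZMod (2 ^ (β + 3))) ^ (β + 2) ≠ 0 := by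
    have := natne (2 ^ (β + 2)) (by positivity) (by omega)
    push_cast at this; exact this
  have nep2 : (2 : ZMod (2 ^ (β + 3))) + 2 ^ (β + 2) ≠ 0 := by
    have := natne (2 + 2 ^ (β + 2)) (by omega) (by omega)
    push_cast at this; exact this
  -- distinctness
  have d12 : (1 : (ZMod (2 ^ (β + 3)))ˣ) ≠ -1 := by
    intro h; apply ne2
    have := congrArg (Units.val) h
    simp only [Units.val_one, Units.val_neg] at this
    linear_combination this
  have d1T : (1 : (ZMod (2 ^ (β + 3)))ˣ) ≠ T := by
    intro h; apply nep
    have := congrArg (Units.val) h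
    simp only [Units.val_one, hTdef] at this
    rw [htdef] at this
    linear_combination -this
  have d1T' : (1 : (ZMod (2 ^ (β + 3)))ˣ) ≠ -T := by
    intro h; apply nep2
    have := congrArg (Units.val) h
    simp only [Units.val_one, Units.val_neg, hTdef] at this
    rw [htdef] at this
    linear_combination this
  have d2T : (-1 : (ZMod (2 ^ (β + 3)))ˣ) ≠ T := by
    intro h; apply nep2
    have := congrArg (Units.val) h
    simp only [Units.val_one, Units.val_neg, hTdef] at this
    rw [htdef] at this
    linear_combination -this
  have d2T' : (-1 : (ZMod (2 ^ (β + 3)))ˣ) ≠ -T := by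
    intro h; apply nep
    have := congrArg (Units.val) h
    simp only [Units.val_one, Units.val_neg, hTdef] at this
    rw [htdef] at this
    linear_combination this
  have dTT' : T ≠ -T := by
    intro h; apply ne2
    have := congrArg (Units.val) h
    simp only [Units.val_neg, hTdef] at this
    rw [htdef] at this
    have h2 : (2:ZMod (2 ^ (β + 3))) + 2 ^ (β + 3) = 0 := by linear_combination this
    rw [hzero] at h2
    linear_combination h2
  -- the set of square roots of 1
  have key : univ.filter (fun u : (ZMod (2 ^ (β + 3)))ˣ => u * u = 1)
      = {1, -1, T, -T} := by
    ext u
    simp only [mem_filter, mem_univ, true_and, mem_insert, mem_singleton]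
    constructor
    · intro hu2
      have hval : (u : ZMod (2 ^ (β + 3))) * u = 1 := by
        rw [← Units.val_mul, hu2, Units.val_one]
      rcases aux_sq_classify (u : ZMod (2 ^ (β + 3))) u.isUnit hval with h | h | h | h
      · left; exact Units.ext (by simpa using h)
      · right; left; exact Units.ext (by simpa using h)
      · right; right; left
        refine Units.ext ?_
        show (u : ZMod (2 ^ (β + 3))) = t
        rw [htdef]; exact h
      · right; right; right
        refine Units.ext ?_
        rw [Units.val_neg]
        show (u : ZMod (2 ^ (β + 3))) = -t
        rw [htdef]; exact h
    · rintro (rfl | rfl | rfl | rfl)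
      · simp
      · simp
      · refine Units.ext ?_
        rw [Units.val_mul, Units.val_one]
        exact ht2
      · refine Units.ext ?_
        rw [Units.val_mul, Units.val_neg, Units.val_one]
        show -t * -t = 1
        rw [neg_mul_neg]; exact ht2
  -- product over non-involutions is 1
  have hrest : ∏ u ∈ univ.filter (fun u : (ZMod (2 ^ (β + 3)))ˣ => ¬ (u * u = 1)), u = 1 := by
    refine Finset.prod_involution (fun u _ => u⁻¹) (fun a _ => mul_inv_cancel a)
      (fun a ha hne hinv => ?_) (fun a ha => ?_) (fun a ha => inv_inv a)
    · simp only [mem_filter, mem_univ, true_and] at ha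
      apply ha
      have hinv' : a⁻¹ = a := hinv
      nth_rewrite 2 [← hinv']
      exact mul_inv_cancel a
    · simp only [mem_filter, mem_univ, true_and] at ha ⊢
      intro h1
      apply ha
      have := congrArg (·⁻¹) h1
      simpa [mul_inv] using this
  have split := Finset.prod_filter_mul_prod_filter_not univ
    (fun u : (ZMod (2 ^ (β + 3)))ˣ => u * u = 1) (fun u => u)
  rw [← split, hrest, mul_one, key]
  rw [Finset.prod_insert (by simp [d12, d1T, d1T']),
      Finset.prod_insert (by simp [d2T, d2T']),
      Finset.prod_insert (by simp [dTT']), Finset.prod_singleton]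
  have hTT : T * T = 1 := Units.ext (by simpa using ht2)
  have hfin : (1 : (ZMod (2 ^ (β + 3)))ˣ) * (-1 * (T * -T)) = T * T := by
    rw [one_mul, mul_neg, neg_mul_neg, one_mul]
  rw [hfin, hTT]

theorem lemma5_not_in_A (m : ℤ) (hm : m ≠ 0) (x : ℤ)
    (hA : ¬ (m.natAbs = 1 ∨ m.natAbs = 2 ∨ m.natAbs = 4 ∨
      ∃ p β : ℕ, p.Prime ∧ Odd p ∧ 1 ≤ β ∧ (m.natAbs = p ^ β ∨ m.natAbs = 2 * p ^ β)))
    (p : ℕ) (hp : p.Prime) (hpx : (p : ℤ) ∣ x) (α : ℕ)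
    (hpm : p ^ α ∣ m.natAbs) (hpm' : ¬ p ^ (α + 1) ∣ m.natAbs) (hα : 1 ≤ α) :
    (∏ c ∈ (Finset.range m.natAbs).filter (fun c => Nat.Coprime c m.natAbs), (x + (c : ℤ)))
      ≡ 1 [ZMOD (p ^ α)] := by
  classical
  set n := m.natAbs with hn
  have hn0 : n ≠ 0 := Int.natAbs_ne_zero.mpr hm
  haveI : NeZero n := ⟨hn0⟩
  have hq0 : p ^ α ≠ 0 := pow_ne_zero _ hp.pos.ne'
  haveI : NeZero (p ^ α) := ⟨hq0⟩
  have hqn : p ^ α ∣ n := hpm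
  obtain ⟨k, hk⟩ := hqn
  have hqn : p ^ α ∣ n := hpm
  have hpk : ¬ p ∣ k := by
    rintro ⟨j, hj⟩
    exact hpm' ⟨j, by rw [hk, hj]; ring⟩
  have hk0 : k ≠ 0 := by rintro rfl; exact hn0 (by rw [hk, mul_zero])
  rw [show ((p:ℤ)) ^ α = ((p ^ α : ℕ) : ℤ) by push_cast; ring]
  rw [← ZMod.intCast_eq_intCast_iff]
  push_cast
  -- Step A : reindex over units of ZMod n
  have stepA : (∏ c ∈ (Finset.range n).filter (fun c => Nat.Coprime c n),
        ((x : ZMod (p ^ α)) + (c : ZMod (p ^ α))))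
      = ∏ u : (ZMod n)ˣ, ((x : ZMod (p ^ α)) +
          ((ZMod.unitsMap hqn u : (ZMod (p ^ α))ˣ) : ZMod (p ^ α))) := by
    apply Finset.prod_bij (fun c hc => ZMod.unitOfCoprime c (mem_filter.mp hc).2)
    · intro a ha; exact mem_univ _
    · intro a ha b hb hab
      have ha' := mem_filter.mp ha
      have hb' := mem_filter.mp hb
      have : ((a : ℕ) : ZMod n) = b := congrArg Units.val hab
      have h2 : ((a : ℕ) : ZMod n).val = ((b : ℕ) : ZMod n).val := by rw [this]
      rwa [ZMod.val_natCast_of_lt (mem_range.mp ha'.1),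
        ZMod.val_natCast_of_lt (mem_range.mp hb'.1)] at h2
    · intro u _
      refine ⟨(u : ZMod n).val, mem_filter.mpr ⟨mem_range.mpr (ZMod.val_lt _),
        ZMod.val_coe_unit_coprime u⟩, ?_⟩
      apply Units.ext
      simp [ZMod.coe_unitOfCoprime, ZMod.natCast_val, ZMod.cast_id]
    · intro c hc
      congr 1
      rw [ZMod.unitsMap, Units.coe_map]
      simp only [ZMod.coe_unitOfCoprime, MonoidHom.coe_coe, ZMod.castHom_apply]
      rw [ZMod.cast_natCast hqn]
  rw [stepA]
  -- Step C : group the product along fibers of unitsMap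
  have hsurj : Function.Surjective (ZMod.unitsMap hqn) := ZMod.unitsMap_surjective hqn
  rw [Finset.prod_comp (fun v : (ZMod (p ^ α))ˣ => (x : ZMod (p ^ α)) + (v : ZMod (p ^ α)))
    (ZMod.unitsMap hqn)]
  rw [Finset.image_univ_of_surjective hsurj]
  -- all fibers have the same cardinality
  have hfiber : ∀ v : (ZMod (p ^ α))ˣ,
      #{u : (ZMod n)ˣ | ZMod.unitsMap hqn u = v} = #{u : (ZMod n)ˣ | ZMod.unitsMap hqn u = 1} := by
    intro v
    obtain ⟨u₀, hu₀⟩ := hsurj v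
    apply Finset.card_nbij' (fun u => u * u₀⁻¹) (fun u => u * u₀)
    · intro a ha
      simp only [mem_coe, mem_filter, mem_univ, true_and] at ha ⊢
      rw [map_mul, map_inv, ha, hu₀, mul_inv_cancel]
    · intro a ha
      simp only [mem_coe, mem_filter, mem_univ, true_and] at ha ⊢
      rw [map_mul, ha, hu₀, one_mul]
    · intro a _; simp
    · intro a _; simp
  rw [Finset.prod_congr rfl (fun v _ => by rw [hfiber v])]
  set e := #{u : (ZMod n)ˣ | ZMod.unitsMap hqn u = 1} with he
  rw [Finset.prod_pow]
  -- Step D : shift is a bijection on units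
  have hnil : IsNilpotent (x : ZMod (p ^ α)) := by
    obtain ⟨y, hy⟩ := hpx
    refine ⟨α, ?_⟩
    rw [hy]
    push_cast
    rw [mul_pow]
    have : ((p : ZMod (p ^ α)))^α = (((p ^ α : ℕ) : ZMod (p ^ α))) := by push_cast; ring
    rw [this, ZMod.natCast_self, zero_mul]
  have hunit : ∀ v : (ZMod (p ^ α))ˣ, IsUnit ((x : ZMod (p ^ α)) + (v : ZMod (p ^ α))) :=
    fun v => by
      have h := hnil.isUnit_add_left_of_commute v.isUnit (Commute.all _ _)
      rwa [add_comm] at h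
  set ψ : (ZMod (p ^ α))ˣ → (ZMod (p ^ α))ˣ := fun v => (hunit v).unit with hψ
  have hψinj : Function.Injective ψ := by
    intro a b hab
    have : ((ψ a : (ZMod (p ^ α))ˣ) : ZMod (p ^ α)) = ((ψ b : (ZMod (p ^ α))ˣ) : ZMod (p ^ α)) := by
      rw [hab]
    rw [hψ] at this
    simp only [IsUnit.unit_spec] at this
    exact Units.ext (by exact add_left_cancel this)
  have hψbij : Function.Bijective ψ := Finite.injective_iff_bijective.mp hψinj
  have stepD : ∏ v : (ZMod (p ^ α))ˣ, ((x : ZMod (p ^ α)) + (v : ZMod (p ^ α)))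
      = ((∏ v : (ZMod (p ^ α))ˣ, v : (ZMod (p ^ α))ˣ) : ZMod (p ^ α)) := by
    have h1 : ∀ v : (ZMod (p ^ α))ˣ, ((x : ZMod (p ^ α)) + (v : ZMod (p ^ α))) = ((ψ v : (ZMod (p ^ α))ˣ) : ZMod (p ^ α)) := by
      intro v; rw [hψ]; simp only [IsUnit.unit_spec]
    rw [Finset.prod_congr rfl (fun v _ => h1 v)]
    rw [Fintype.prod_bijective ψ hψbij _ (fun w => (w : ZMod (p ^ α))) (fun v => rfl)]
    rw [← Units.coeHom_apply, map_prod]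
    rfl
  rw [stepD]
  set P : (ZMod (p ^ α))ˣ := ∏ v : (ZMod (p ^ α))ˣ, v with hP
  rw [← Units.coeHom_apply, ← map_pow]
  suffices hPe : P ^ e = 1 by rw [hPe]; simp
  -- e = totient k
  have hcount : Nat.totient n = Nat.totient (p ^ α) * e := by
    have h1 : Fintype.card (ZMod n)ˣ = ∑ v : (ZMod (p ^ α))ˣ,
        #{u : (ZMod n)ˣ | ZMod.unitsMap hqn u = v} := by
      rw [← Finset.card_univ]
      exact Finset.card_eq_sum_card_fiberwise (fun u _ => mem_univ _)
    rw [Finset.sum_congr rfl (fun v _ => hfiber v), Finset.sum_const, Finset.card_univ,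
      smul_eq_mul] at h1
    rw [← ZMod.card_units_eq_totient, ← ZMod.card_units_eq_totient]
    exact h1
  have hcop : Nat.Coprime (p ^ α) k := Nat.Coprime.pow_left _ ((hp.coprime_iff_not_dvd).mpr hpk)
  have htot : Nat.totient n = Nat.totient (p ^ α) * Nat.totient k := by
    rw [hk]; exact Nat.totient_mul hcop
  have hek : e = Nat.totient k := by
    have hq1 : 0 < Nat.totient (p ^ α) := Nat.totient_pos.mpr (Nat.pos_of_ne_zero hq0)
    exact Nat.eq_of_mul_eq_mul_left hq1 (by rw [← hcount, htot])
  have hPP : P * P = 1 := aux_prod_sq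
  rcases Nat.even_or_odd e with ⟨f, hf⟩ | hodd
  · rw [hf, show f + f = 2 * f by ring, pow_mul, pow_two, hPP, one_pow]
  · -- e odd: k ≤ 2
    have hkle : k ≤ 2 := by
      by_contra hgt
      have hev : Even (Nat.totient k) := Nat.totient_even (by omega)
      rw [← hek] at hev
      exact (Nat.not_even_iff_odd.mpr hodd) hev
    have hk12 : k = 1 ∨ k = 2 := by omega
    rcases hp.eq_two_or_odd' with rfl | hoddp
    · -- p = 2
      have hk1 : k = 1 := by
        rcases hk12 with h | h
        · exact h
        · exact absurd (by rw [h] : (2:ℕ) ∣ k) hpk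
      have hn2 : n = 2 ^ α := by rw [hk, hk1, mul_one]
      have hα3 : 3 ≤ α := by
        by_contra hlt
        rcases (by omega : α = 1 ∨ α = 2) with h1 | h1
        · exact hA (Or.inr (Or.inl (by rw [hn2, h1, pow_one])))
        · exact hA (Or.inr (Or.inr (Or.inl (by rw [hn2, h1]; norm_num))))
      obtain ⟨β, rfl⟩ : ∃ β, α = β + 3 := ⟨α - 3, by omega⟩
      have hP1 : P = 1 := aux_prod_units_two_pow β
      rw [hP1, one_pow]
    · -- p odd : contradiction with hA
      exfalso
      apply hA
      right; right; right
      refine ⟨p, α, hp, hoddp, hα, ?_⟩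
      rcases hk12 with h | h
      · left; rw [hk, h, mul_one]
      · right; rw [hk, h]; ring
end

section
/- If p is prime and a is any integer, then a^p + (p - 1)!·a ≡ 0 (mod p). -/
theorem sierpinski (p : ℕ) (hp : p.Prime) (a : ℤ) :
    a ^ p + (Nat.factorial (p - 1) : ℤ) * a ≡ 0 [ZMOD p] := by
  haveI := Fact.mk hp
  rw [← ZMod.intCast_eq_intCast_iff]
  push_cast
  rw [ZMod.pow_card, ZMod.wilsons_lemma]
  ring
end

section
/- If m is a positive integer with m ≠ 4, and a is any integer, then m divides (a^m - a)·(m - 1)!. -/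
lemma mul_dvd_factorial_aux {x y n : ℕ} (hx : 0 < x) (hxy : x < y) (hyn : y ≤ n) :
    x * y ∣ Nat.factorial n := by
  have h1 : x * y ∣ Nat.factorial y := by
    have : Nat.factorial y = y * Nat.factorial (y - 1) := by
      cases y with
      | zero => omega
      | succ k => simp [Nat.factorial]
    rw [this, Nat.mul_comm x y]
    exact mul_dvd_mul_left y (Nat.dvd_factorial hx (by omega))
  exact h1.trans (Nat.factorial_dvd_factorial hyn)

lemma composite_dvd_factorial {m : ℕ} (h2 : 2 ≤ m) (hp : ¬ m.Prime) (h4 : m ≠ 4) :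
    m ∣ Nat.factorial (m - 1) := by
  obtain ⟨a, ha, ha2, ham⟩ := Nat.exists_dvd_of_not_prime2 h2 hp
  obtain ⟨b, hb⟩ := ha
  have hb2 : 2 ≤ b := by nlinarith [hb ▸ h2]
  have hbm : b < m := by nlinarith
  rcases lt_trichotomy a b with h | h | h
  · exact hb ▸ mul_dvd_factorial_aux (by omega) h (by omega)
  · subst h
    have ha3 : 3 ≤ a := by
      rcases Nat.lt_or_ge a 3 with h' | h'
      · interval_cases a <;> omega
      · exact h'
    have h2a : 2 * a + 1 ≤ m := by nlinarith
    have : a * (2 * a) ∣ Nat.factorial (m - 1) :=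
      mul_dvd_factorial_aux (by omega) (by omega) (by omega)
    exact Nat.dvd_trans (by rw [hb]; exact ⟨2, by ring⟩) this
  · have h' : m = b * a := by rw [hb, mul_comm]
    rw [h']
    exact mul_dvd_factorial_aux (by omega) h (by omega)

theorem smarandache_extension (m : ℕ) (hm : 0 < m) (hm4 : m ≠ 4) (a : ℤ) :
    (m : ℤ) ∣ (a ^ m - a) * (Nat.factorial (m - 1) : ℤ) := by
  rcases eq_or_lt_of_le (show 1 ≤ m from hm) with h1 | h1
  · simp [← h1]
  by_cases hp : m.Prime
  · apply Dvd.dvd.mul_right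
    haveI : Fact m.Prime := ⟨hp⟩
    have : ((a ^ m - a : ℤ) : ZMod m) = 0 := by
      push_cast
      rw [ZMod.pow_card]
      ring
    exact (ZMod.intCast_zmod_eq_zero_iff_dvd _ _).mp this
  · apply Dvd.dvd.mul_left
    exact_mod_cast Int.natCast_dvd_natCast.mpr (composite_dvd_factorial (by omega) hp hm4)
end

section
/- Let m be a nonzero integer, x an integer, d the product of p^{α} over prime powers p^α exactly dividing m with p | x, and m' = m/d. Suppose L(x,m) ≡ ε (mod d) with ε = ±1 and L(x,m) ≡ 0 (mod m'), where L(x,m) = ∏(x + c) over residues c mod m coprime to m. Then for any particular integer solution (k_1⁰, k_2⁰) of k_2·m' − k_1·d = ε, one has L(x, m) ≡ k_2⁰·m' (mod m). -/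
theorem main_theorem_crt (m : ℤ) (hm : m ≠ 0) (x : ℤ)
    (d : ℕ)
    (hd : d = ∏ p ∈ m.natAbs.primeFactors.filter (fun p : ℕ => (p : ℤ) ∣ x),
      p ^ (m.natAbs.factorization p))
    (m' : ℕ) (hm' : m' = m.natAbs / d)
    (L : ℤ)
    (hL : L = ∏ c ∈ (Finset.range m.natAbs).filter (fun c => Nat.Coprime c m.natAbs),
      (x + (c : ℤ)))
    (ε : ℤ) (hε : ε = 1 ∨ ε = -1)
    (h1 : L ≡ ε [ZMOD d]) (h2 : L ≡ 0 [ZMOD m'])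
    (k₁ k₂ : ℤ) (hk : k₂ * m' - k₁ * d = ε) :
    L ≡ k₂ * m' [ZMOD m.natAbs] := by
  have h0 : m.natAbs ≠ 0 := Int.natAbs_ne_zero.mpr hm
  -- d divides m.natAbs
  have hd_dvd : d ∣ m.natAbs := by
    have hfull : ∏ p ∈ m.natAbs.primeFactors, p ^ (m.natAbs.factorization p) = m.natAbs := by
      rw [← Nat.prod_factorization_eq_prod_primeFactors,
        Nat.factorization_prod_pow_eq_self h0]
    calc d ∣ ∏ p ∈ m.natAbs.primeFactors, p ^ (m.natAbs.factorization p) := by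
          rw [hd]; exact Finset.prod_dvd_prod_of_subset _ _ _ (Finset.filter_subset _ _)
      _ = m.natAbs := hfull
  have hdm' : d * m' = m.natAbs := by
    rw [hm']; exact Nat.mul_div_cancel' hd_dvd
  -- coprimality from the bezout-like relation
  have hcop : IsCoprime (d : ℤ) (m' : ℤ) := by
    rcases hε with h | h
    · exact ⟨-k₁, k₂, by rw [h] at hk; linarith⟩
    · exact ⟨k₁, -k₂, by rw [h] at hk; linarith⟩
  -- d ∣ k₂ * m' - L
  have hdvd1 : (d : ℤ) ∣ k₂ * m' - L := by
    have hLe : (d : ℤ) ∣ ε - L := Int.ModEq.dvd h1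
    have : k₂ * m' - L = (ε - L) + k₁ * d := by linarith [hk]
    rw [this]
    exact dvd_add hLe ⟨k₁, by ring⟩
  have hdvd2 : (m' : ℤ) ∣ k₂ * m' - L := by
    have hLe : (m' : ℤ) ∣ L := by
      have := Int.ModEq.dvd h2
      simpa using this.neg_right
    exact dvd_sub ⟨k₂, by ring⟩ hLe
  have : ((d * m' : ℕ) : ℤ) ∣ k₂ * m' - L := by
    push_cast
    exact hcop.mul_dvd hdvd1 hdvd2
  rw [hdm'] at this
  exact (Int.modEq_iff_dvd.mpr this)
end
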